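/- Strict bound preservation of the implicit system scheme: let ψ be a saturation with saturation level α such that γ = inf_{s ∈ [0,α)} (α − s)/(α·ψ(s)) > 0. Suppose ρ^n, ρ^{n+1} satisfy the implicit system scheme relations with no-flux boundary conditions. If ρ_i^n > 0 entrywise and σ_i^n < α for all 1 ≤ i ≤ M, then ρ_i^{n+1} > 0 entrywise and σ_i^{n+1} < α for all 1 ≤ i ≤ M, with no restriction on Δt. -/

import Mathlib

/-!
Both bounds are discrete maximum principles, proved by a mass balance over the set `S` of
offending cells. Summing the scheme over `S`, the fluxes through interfaces inside `S` cancel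
and only those through the boundary of `S` remain. For positivity of species `p` take
`S = {i | ρ'ᵢₚ ≤ 0}`: the upwind flux only carries mass of species `p` out of a cell in
proportion to `ρ'ᵢₚ`, so no mass leaves `S`, although `ρ'ᵢₚ ≤ 0 < ρᵢₚ` on `S`. For the
density bound take `S = {i | σ'ᵢ ≥ α}`: there `ψ(σ'ᵢ) ≤ 0`, which shuts off every flux into a
cell of `S`, so the total mass in `S` cannot grow, although `σ'ᵢ ≥ α > σᵢ` on `S`. Only
`Δt / Δx ≥ 0` enters, hence no restriction on the time step.
-/

/-- A *saturation* with saturation level `α > 0`: a continuous non-increasing function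
`ψ : [0,∞) → ℝ` with `ψ α = 0` and `(α − s)·ψ s > 0` for every `s ≥ 0`, `s ≠ α`. -/
def IsSaturation (ψ : ℝ → ℝ) (α : ℝ) : Prop :=
  0 < α ∧ ContinuousOn ψ (Set.Ici 0) ∧
    (∀ s₁ s₂, 0 ≤ s₁ → s₁ ≤ s₂ → ψ s₂ ≤ ψ s₁) ∧
    ψ α = 0 ∧ ∀ s, 0 ≤ s → s ≠ α → 0 < (α - s) * ψ s

/-- The CFL constant `γ = inf_{s ∈ [0,α)} (α − s)/(α·ψ s)`. -/
noncomputable def gammaCFL (ψ : ℝ → ℝ) (α : ℝ) : ℝ :=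
  sInf ((fun s => (α - s) / (α * ψ s)) '' Set.Ico 0 α)

theorem IsSaturation.nonpos_of_le {ψ : ℝ → ℝ} {α s : ℝ} (hψ : IsSaturation ψ α) (hs : α ≤ s) :
    ψ s ≤ 0 := by
  obtain ⟨hα, -, hmono, hψα, -⟩ := hψ
  exact hψα ▸ hmono α s hα.le hs

namespace Finset

variable {A : Type*} [AddCommGroup A] {S : Finset ℕ}

theorem sum_sub_pred_eq (hS : 0 ∉ S) (f : ℕ → A) :
    ∑ i ∈ S, (f i - f (i - 1)) =
      ∑ i ∈ S with i + 1 ∉ S, f i - ∑ i ∈ S with i - 1 ∉ S, f (i - 1) := by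
  have hpos : ∀ i ∈ S, 1 ≤ i := fun i hi => Nat.one_le_iff_ne_zero.2 fun h => hS (h ▸ hi)
  have hinterior : ∑ i ∈ S with i + 1 ∈ S, f i = ∑ i ∈ S with i - 1 ∈ S, f (i - 1) := by
    refine sum_nbij' (· + 1) (· - 1) ?_ ?_ ?_ ?_ ?_ <;> simp only [mem_filter]
    · intro i hi; simpa using hi.symm
    · intro i hi; rw [Nat.sub_add_cancel (hpos i hi.1)]; exact hi.symm
    · simp
    · intro i hi; exact Nat.sub_add_cancel (hpos i hi.1)
    · simp
  rw [sum_sub_distrib, ← sum_filter_add_sum_filter_not S (· + 1 ∈ S),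
    ← sum_filter_add_sum_filter_not S (fun i => i - 1 ∈ S) (fun i => f (i - 1)), hinterior]
  abel

variable [PartialOrder A] [IsOrderedAddMonoid A]

theorem sum_sub_pred_nonneg (hS : 0 ∉ S) {f : ℕ → A}
    (hout : ∀ i ∈ S, i + 1 ∉ S → 0 ≤ f i) (hin : ∀ i ∉ S, i + 1 ∈ S → f i ≤ 0) :
    0 ≤ ∑ i ∈ S, (f i - f (i - 1)) := by
  rw [sum_sub_pred_eq hS, sub_nonneg]
  refine (sum_nonpos fun i hi => ?_).trans (sum_nonneg fun i hi => ?_)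
  · rw [mem_filter] at hi
    have hi1 : i - 1 + 1 = i := Nat.sub_add_cancel (Nat.one_le_iff_ne_zero.2 fun h => hS (h ▸ hi.1))
    exact hin _ hi.2 (hi1 ▸ hi.1)
  · rw [mem_filter] at hi
    exact hout i hi.1 hi.2

end Finset

theorem sum_le_sum_of_outward_flux {R : Type*} [CommRing R] [PartialOrder R] [IsOrderedRing R]
    {S : Finset ℕ} (hS : 0 ∉ S) {lam : R} (hlam : 0 ≤ lam) {w w' G : ℕ → R}
    (hstep : ∀ i ∈ S, w' i = w i - lam * (G i - G (i - 1)))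
    (hout : ∀ i ∈ S, i + 1 ∉ S → 0 ≤ G i) (hin : ∀ i ∉ S, i + 1 ∈ S → G i ≤ 0) :
    ∑ i ∈ S, w' i ≤ ∑ i ∈ S, w i :=
  calc ∑ i ∈ S, w' i = ∑ i ∈ S, w i - lam * ∑ i ∈ S, (G i - G (i - 1)) := by
        rw [Finset.sum_congr rfl hstep, Finset.sum_sub_distrib, Finset.mul_sum]
    _ ≤ ∑ i ∈ S, w i := sub_le_self _ (mul_nonneg hlam (Finset.sum_sub_pred_nonneg hS hout hin))

section Scheme

variable {P : ℕ} {ψ : ℝ → ℝ}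

def upwindFlux (ψ : ℝ → ℝ) (ρl ρr u : Fin P → ℝ) (p : Fin P) : ℝ :=
  ρl p * max (ψ (∑ q, ρr q)) 0 * max (u p) 0 + ρr p * max (ψ (∑ q, ρl q)) 0 * min (u p) 0

variable {ρl ρr u : Fin P → ℝ} {p : Fin P}

theorem upwindFlux_nonpos (hl : ρl p ≤ 0) (hr : 0 ≤ ρr p) : upwindFlux ψ ρl ρr u p ≤ 0 :=
  add_nonpos
    (mul_nonpos_of_nonpos_of_nonneg (mul_nonpos_of_nonpos_of_nonneg hl (le_max_right _ _))
      (le_max_right _ _))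
    (mul_nonpos_of_nonneg_of_nonpos (mul_nonneg hr (le_max_right _ _)) (min_le_right _ _))

theorem upwindFlux_nonneg (hl : 0 ≤ ρl p) (hr : ρr p ≤ 0) : 0 ≤ upwindFlux ψ ρl ρr u p :=
  add_nonneg (mul_nonneg (mul_nonneg hl (le_max_right _ _)) (le_max_right _ _))
    (mul_nonneg_of_nonpos_of_nonpos
      (mul_nonpos_of_nonpos_of_nonneg hr (le_max_right _ _)) (min_le_right _ _))

theorem upwindFlux_nonneg_of_psi_nonpos (hl : 0 ≤ ρl p) (hψ : ψ (∑ q, ρl q) ≤ 0) :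
    0 ≤ upwindFlux ψ ρl ρr u p := by
  rw [upwindFlux, max_eq_right hψ, mul_zero, zero_mul, add_zero]
  exact mul_nonneg (mul_nonneg hl (le_max_right _ _)) (le_max_right _ _)

theorem upwindFlux_nonpos_of_psi_nonpos (hr : 0 ≤ ρr p) (hψ : ψ (∑ q, ρr q) ≤ 0) :
    upwindFlux ψ ρl ρr u p ≤ 0 := by
  rw [upwindFlux, max_eq_right hψ, mul_zero, zero_mul, zero_add]
  exact mul_nonpos_of_nonneg_of_nonpos (mul_nonneg hr (le_max_right _ _)) (min_le_right _ _)

/-- One step of the implicit scheme on the cells `1, …, M`: `u i` and `F i` live on the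
interface `i + 1/2`, and `lam = Δt / Δx`. -/
structure ImplicitStep (ψ : ℝ → ℝ) (lam : ℝ) (M : ℕ) (u ρ ρ' F : ℕ → Fin P → ℝ) : Prop where
  flux_zero : ∀ p, F 0 p = 0
  flux_last : ∀ p, F M p = 0
  flux_eq : ∀ i, 1 ≤ i → i + 1 ≤ M → ∀ p, F i p = upwindFlux ψ (ρ' i) (ρ' (i + 1)) (u i) p
  step : ∀ i, 1 ≤ i → i ≤ M → ∀ p, ρ' i p = ρ i p - lam * (F i p - F (i - 1) p)

namespace ImplicitStep

variable {lam α : ℝ} {M i : ℕ} {u ρ ρ' F : ℕ → Fin P → ℝ}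

theorem flux_of_interior (h : ImplicitStep ψ lam M u ρ ρ' F) {q : ℝ → Prop} (hq : q 0)
    (hi : i ≤ M) (hint : 1 ≤ i → i + 1 ≤ M → q (upwindFlux ψ (ρ' i) (ρ' (i + 1)) (u i) p)) :
    q (F i p) := by
  rcases Nat.eq_zero_or_pos i with rfl | hi1
  · rwa [h.flux_zero]
  rcases hi.eq_or_lt with rfl | hiM
  · rwa [h.flux_last]
  rw [h.flux_eq i hi1 hiM]
  exact hint hi1 hiM

theorem flux_nonpos (h : ImplicitStep ψ lam M u ρ ρ' F) (hi : i ≤ M) (hl : ρ' i p ≤ 0)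
    (hr : i + 1 ≤ M → 0 ≤ ρ' (i + 1) p) : F i p ≤ 0 :=
  h.flux_of_interior (q := (· ≤ 0)) le_rfl hi fun _ hiM => upwindFlux_nonpos hl (hr hiM)

theorem flux_nonneg (h : ImplicitStep ψ lam M u ρ ρ' F) (hi : i + 1 ≤ M)
    (hl : 1 ≤ i → 0 ≤ ρ' i p) (hr : ρ' (i + 1) p ≤ 0) : 0 ≤ F i p :=
  h.flux_of_interior (q := (0 ≤ ·)) le_rfl (by omega) fun hi1 _ => upwindFlux_nonneg (hl hi1) hr

theorem flux_nonneg_of_psi_nonpos (h : ImplicitStep ψ lam M u ρ ρ' F) (hi : i ≤ M)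
    (hl : 0 ≤ ρ' i p) (hψ : ψ (∑ q, ρ' i q) ≤ 0) : 0 ≤ F i p :=
  h.flux_of_interior (q := (0 ≤ ·)) le_rfl hi fun _ _ => upwindFlux_nonneg_of_psi_nonpos hl hψ

theorem flux_nonpos_of_psi_nonpos (h : ImplicitStep ψ lam M u ρ ρ' F) (hi : i + 1 ≤ M)
    (hr : 0 ≤ ρ' (i + 1) p) (hψ : ψ (∑ q, ρ' (i + 1) q) ≤ 0) : F i p ≤ 0 :=
  h.flux_of_interior (q := (· ≤ 0)) le_rfl (by omega) fun _ _ =>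
    upwindFlux_nonpos_of_psi_nonpos hr hψ

theorem sum_step (h : ImplicitStep ψ lam M u ρ ρ' F) (hi1 : 1 ≤ i) (hiM : i ≤ M) :
    ∑ p, ρ' i p = ∑ p, ρ i p - lam * (∑ p, F i p - ∑ p, F (i - 1) p) := by
  simp only [h.step i hi1 hiM, Finset.sum_sub_distrib, ← Finset.mul_sum]

theorem pos_of_pos (h : ImplicitStep ψ lam M u ρ ρ' F) (hlam : 0 ≤ lam)
    (hρ : ∀ i, 1 ≤ i → i ≤ M → ∀ p, 0 < ρ i p) : ∀ i, 1 ≤ i → i ≤ M → ∀ p, 0 < ρ' i p := by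
  intro i hi1 hiM p
  by_contra! hle
  set S := {j ∈ Finset.Icc 1 M | ρ' j p ≤ 0}
  have hmemS : ∀ j, j ∈ S ↔ 1 ≤ j ∧ j ≤ M ∧ ρ' j p ≤ 0 := by simp [S, and_assoc]
  have hmass : ∑ j ∈ S, -ρ' j p ≤ ∑ j ∈ S, -ρ j p := by
    refine sum_le_sum_of_outward_flux (G := fun j => -F j p) (by simp [hmemS]) hlam
      (fun j hj => ?_) (fun j hj hj1 => ?_) (fun j hj hj1 => ?_)
    · rw [hmemS] at hj
      linarith [h.step j hj.1 hj.2.1 p]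
    · rw [hmemS] at hj hj1
      exact neg_nonneg.2 (h.flux_nonpos hj.2.1 hj.2.2 fun hjM => by
        by_contra!; exact hj1 ⟨by omega, hjM, this.le⟩)
    · rw [hmemS] at hj hj1
      exact neg_nonpos.2 (h.flux_nonneg hj1.2.1 (fun hj0 => by
        by_contra!; exact hj ⟨hj0, by omega, this.le⟩) hj1.2.2)
  have hgain : ∑ j ∈ S, -ρ j p < ∑ j ∈ S, -ρ' j p :=
    Finset.sum_lt_sum_of_nonempty ⟨i, (hmemS i).2 ⟨hi1, hiM, hle⟩⟩ fun j hj => by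
      rw [hmemS] at hj
      linarith [hρ j hj.1 hj.2.1 p]
  exact hmass.not_gt hgain

theorem sum_lt_of_sum_lt (h : ImplicitStep ψ lam M u ρ ρ' F) (hψ : IsSaturation ψ α) (hlam : 0 ≤ lam)
    (hρ' : ∀ i, 1 ≤ i → i ≤ M → ∀ p, 0 ≤ ρ' i p)
    (hρ : ∀ i, 1 ≤ i → i ≤ M → ∑ p, ρ i p < α) :
    ∀ i, 1 ≤ i → i ≤ M → ∑ p, ρ' i p < α := by
  intro i hi1 hiM
  by_contra! hge
  set S := {j ∈ Finset.Icc 1 M | α ≤ ∑ p, ρ' j p}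
  have hmemS : ∀ j, j ∈ S ↔ 1 ≤ j ∧ j ≤ M ∧ α ≤ ∑ p, ρ' j p := by simp [S, and_assoc]
  have hmass : ∑ j ∈ S, ∑ p, ρ' j p ≤ ∑ j ∈ S, ∑ p, ρ j p := by
    refine sum_le_sum_of_outward_flux (G := fun j => ∑ p, F j p) (by simp [hmemS]) hlam
      (fun j hj => ?_) (fun j hj _ => ?_) (fun j _ hj1 => ?_)
    · rw [hmemS] at hj
      exact h.sum_step hj.1 hj.2.1
    · rw [hmemS] at hj
      exact Finset.sum_nonneg fun p _ => h.flux_nonneg_of_psi_nonpos hj.2.1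
        (hρ' j hj.1 hj.2.1 p) (hψ.nonpos_of_le hj.2.2)
    · rw [hmemS] at hj1
      exact Finset.sum_nonpos fun p _ => h.flux_nonpos_of_psi_nonpos hj1.2.1
        (hρ' (j + 1) hj1.1 hj1.2.1 p) (hψ.nonpos_of_le hj1.2.2)
  have hgain : ∑ j ∈ S, ∑ p, ρ j p < ∑ j ∈ S, ∑ p, ρ' j p :=
    Finset.sum_lt_sum_of_nonempty ⟨i, (hmemS i).2 ⟨hi1, hiM, hge⟩⟩ fun j hj => by
      rw [hmemS] at hj
      linarith [hρ j hj.1 hj.2.1]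
  exact hmass.not_gt hgain

end ImplicitStep

end Scheme

theorem implicit_system_strict_bound_preservation_general
    (ψ : ℝ → ℝ) (α : ℝ) (hψ : IsSaturation ψ α)
    (Δx Δt : ℝ) (hΔx : 0 < Δx) (hΔt : 0 < Δt)
    (P M : ℕ)
    (u ρn ρn1 F : ℕ → Fin P → ℝ)
    (hF0 : ∀ p, F 0 p = 0) (hFM : ∀ p, F M p = 0)
    (hFdef : ∀ i, 1 ≤ i → i + 1 ≤ M → ∀ p,
      F i p = ρn1 i p * max (ψ (∑ q, ρn1 (i + 1) q)) 0 * max (u i p) 0 +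
        ρn1 (i + 1) p * max (ψ (∑ q, ρn1 i q)) 0 * min (u i p) 0)
    (hscheme : ∀ i, 1 ≤ i → i ≤ M → ∀ p,
      ρn1 i p = ρn i p - Δt / Δx * (F i p - F (i - 1) p))
    (hρn : ∀ i, 1 ≤ i → i ≤ M → (∀ p, 0 < ρn i p) ∧ (∑ p, ρn i p) < α) :
    ∀ i, 1 ≤ i → i ≤ M → (∀ p, 0 < ρn1 i p) ∧ (∑ p, ρn1 i p) < α := by
  have hlam : 0 ≤ Δt / Δx := by positivity
  have h : ImplicitStep ψ (Δt / Δx) M u ρn ρn1 F := ⟨hF0, hFM, hFdef, hscheme⟩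
  have hpos := h.pos_of_pos hlam fun i hi1 hiM => (hρn i hi1 hiM).1
  exact fun i hi1 hiM => ⟨hpos i hi1 hiM,
    h.sum_lt_of_sum_lt hψ hlam (fun j hj1 hjM p => (hpos j hj1 hjM p).le)
      (fun j hj1 hjM => (hρn j hj1 hjM).2) i hi1 hiM⟩

/-- Strict bound preservation of the implicit system scheme with no-flux boundary
conditions: `u i p` denotes `(u_{i+1/2})_p` and `F i p` denotes `(F_{i+1/2})_p`. -/
theorem implicit_system_strict_bound_preservation
    (ψ : ℝ → ℝ) (α : ℝ) (hψ : IsSaturation ψ α)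
    (hγ : 0 < gammaCFL ψ α)
    (Δx Δt : ℝ) (hΔx : 0 < Δx) (hΔt : 0 < Δt)
    (P M : ℕ) (hM : 1 ≤ M)
    (u ρn ρn1 F : ℕ → Fin P → ℝ)
    (hF0 : ∀ p, F 0 p = 0) (hFM : ∀ p, F M p = 0)
    (hFdef : ∀ i, 1 ≤ i → i + 1 ≤ M → ∀ p,
      F i p = ρn1 i p * max (ψ (∑ q, ρn1 (i + 1) q)) 0 * max (u i p) 0 +
        ρn1 (i + 1) p * max (ψ (∑ q, ρn1 i q)) 0 * min (u i p) 0)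
    (hscheme : ∀ i, 1 ≤ i → i ≤ M → ∀ p,
      ρn1 i p = ρn i p - Δt / Δx * (F i p - F (i - 1) p))
    (hρn : ∀ i, 1 ≤ i → i ≤ M → (∀ p, 0 < ρn i p) ∧ (∑ p, ρn i p) < α) :
    ∀ i, 1 ≤ i → i ≤ M → (∀ p, 0 < ρn1 i p) ∧ (∑ p, ρn1 i p) < α :=
  implicit_system_strict_bound_preservation_general ψ α hψ Δx Δt hΔx hΔt P M u ρn ρn1 F hF0 hFM
    hFdef hscheme hρn
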